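/- For α ∈ (0,1) and z ∈ ℂ \ (−∞,0), the function y ↦ y^{α−1}/(y+z) satisfies ∫₀^∞ y^{α−1}/(y+z) dy = π z^{α−1}/sin(απ), using the principal branch of z^{α−1}. -/

import Mathlib

/-!
For real `x > 0` the substitution `y = x t` gives `∫₀^∞ y^(s-1)/(y+x) dy = x^(s-1) I(s)` with
`I(s) = ∫₀^∞ t^(s-1)/(t+1) dt`, and the substitution `t = u/(1-u)` turns `I(s)` into the Beta
integral `B(s, 1-s) = Γ(s) Γ(1-s) = π / sin(π s)`. Both sides of the identity are holomorphic in
`z` on the slit plane (the integral by differentiation under the integral sign, dominated by a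
multiple of `t^(Re s - 1)/(t+1)`), and they agree on the positive reals, so they agree everywhere.
-/

open MeasureTheory Set Filter Topology
open scoped Real

theorem image_div_one_sub_Ioo : (fun x : ℝ => x / (1 - x)) '' Ioo 0 1 = Ioi 0 := by
  ext t
  constructor
  · rintro ⟨x, ⟨hx0, hx1⟩, rfl⟩
    exact div_pos hx0 (sub_pos.2 hx1)
  · intro ht
    have ht1 : 0 < 1 + t := by linarith [mem_Ioi.1 ht]
    refine ⟨t / (1 + t), ⟨div_pos ht ht1, (div_lt_one ht1).2 (by linarith)⟩, ?_⟩
    field_simp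
    ring

theorem injOn_div_one_sub_Ioo : InjOn (fun x : ℝ => x / (1 - x)) (Ioo 0 1) := by
  intro a ha b hb hab
  have ha1 : 1 - a ≠ 0 := (sub_pos.2 ha.2).ne'
  have hb1 : 1 - b ≠ 0 := (sub_pos.2 hb.2).ne'
  field_simp at hab
  linarith

theorem hasDerivAt_div_one_sub {x : ℝ} (hx : x ≠ 1) :
    HasDerivAt (fun x : ℝ => x / (1 - x)) ((1 - x) ^ 2)⁻¹ x := by
  have hx1 : 1 - x ≠ 0 := sub_ne_zero.2 (Ne.symm hx)
  refine ((hasDerivAt_id' x).div ((hasDerivAt_id' x).const_sub 1) hx1).congr_deriv ?_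
  field_simp
  ring

namespace Complex

theorem abs_deriv_smul_cpow_div_add_one (s : ℂ) {x : ℝ} (hx : x ∈ Ioo (0 : ℝ) 1) :
    |((1 - x) ^ 2)⁻¹| •
        (((x / (1 - x) : ℝ) : ℂ) ^ (s - 1) / (((x / (1 - x) : ℝ) : ℂ) + 1))
      = (x : ℂ) ^ (s - 1) * (1 - (x : ℂ)) ^ ((1 - s) - 1) := by
  obtain ⟨hx0, hx1⟩ := hx
  have hu : 0 < 1 - x := sub_pos.2 hx1
  have hu' : (1 - x : ℂ) ≠ 0 := by exact_mod_cast hu.ne'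
  rw [abs_of_pos (by positivity), real_smul, ofReal_div, div_cpow_ofReal_nonneg hx0.le hu.le,
    show (1 : ℂ) - s - 1 = -(s - 1 + 1) by ring, cpow_neg,
    cpow_add _ _ (by exact_mod_cast hu.ne'), cpow_one]
  push_cast
  have : (1 - x : ℂ) ^ (s - 1) ≠ 0 := by simp [hu']
  field_simp
  ring

theorem integrableOn_cpow_div_add_one {s : ℂ} (hs0 : 0 < s.re) (hs1 : s.re < 1) :
    IntegrableOn (fun t : ℝ => (t : ℂ) ^ (s - 1) / (t + 1)) (Ioi 0) := by
  rw [← image_div_one_sub_Ioo, integrableOn_image_iff_integrableOn_abs_deriv_smul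
    measurableSet_Ioo (fun x hx => (hasDerivAt_div_one_sub hx.2.ne).hasDerivWithinAt)
    injOn_div_one_sub_Ioo]
  refine (integrableOn_congr_fun (fun x hx => abs_deriv_smul_cpow_div_add_one s hx)
    measurableSet_Ioo).2 ?_
  have hbeta := betaIntegral_convergent hs0 (by simpa using hs1 : 0 < (1 - s).re)
  rwa [intervalIntegrable_iff_integrableOn_Ioo_of_le zero_le_one] at hbeta

theorem integral_cpow_div_add_one {s : ℂ} (hs0 : 0 < s.re) (hs1 : s.re < 1) :
    ∫ t in Ioi (0 : ℝ), (t : ℂ) ^ (s - 1) / (t + 1) = π / sin (π * s) := by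
  rw [← image_div_one_sub_Ioo, integral_image_eq_integral_abs_deriv_smul
    measurableSet_Ioo (fun x hx => (hasDerivAt_div_one_sub hx.2.ne).hasDerivWithinAt)
    injOn_div_one_sub_Ioo, setIntegral_congr_fun measurableSet_Ioo
    (fun x hx => abs_deriv_smul_cpow_div_add_one s hx), ← integral_Ioc_eq_integral_Ioo,
    ← intervalIntegral.integral_of_le zero_le_one, ← betaIntegral, ← Gamma_mul_Gamma_one_sub]
  have := Gamma_mul_Gamma_eq_betaIntegral hs0 (by simpa using hs1 : 0 < (1 - s).re)
  rwa [add_sub_cancel, Gamma_one, one_mul, eq_comm] at this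

theorem integral_cpow_div_add_ofReal (s : ℂ) {x : ℝ} (hx : 0 < x) :
    ∫ y in Ioi (0 : ℝ), (y : ℂ) ^ (s - 1) / (y + x)
      = (x : ℂ) ^ (s - 1) * ∫ t in Ioi (0 : ℝ), (t : ℂ) ^ (s - 1) / (t + 1) := by
  have hscale : ∀ t ∈ Ioi (0 : ℝ),
      x • (((x * t : ℝ) : ℂ) ^ (s - 1) / ((x * t : ℝ) + x))
        = (x : ℂ) ^ (s - 1) * ((t : ℂ) ^ (s - 1) / (t + 1)) := by
    intro t ht
    have hx' : (x : ℂ) ≠ 0 := by exact_mod_cast hx.ne'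
    have ht' : (t : ℂ) + 1 ≠ 0 := by
      exact_mod_cast (by linarith [mem_Ioi.1 ht] : t + 1 ≠ 0)
    rw [real_smul, ofReal_mul, mul_cpow_ofReal_nonneg hx.le (le_of_lt ht)]
    field_simp
  have hsub := integral_comp_mul_left_Ioi' (fun y : ℝ => (y : ℂ) ^ (s - 1) / (y + x)) 0 hx
  rw [mul_zero] at hsub
  rw [← hsub, ← integral_smul, setIntegral_congr_fun measurableSet_Ioi hscale,
    integral_const_mul]

theorem ofReal_add_mem_slitPlane {w : ℂ} (hw : w ∈ slitPlane) {y : ℝ} (hy : 0 ≤ y) :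
    (y : ℂ) + w ∈ slitPlane := by
  rw [mem_slitPlane_iff] at hw ⊢
  simp only [add_re, ofReal_re, add_im, ofReal_im, zero_add]
  exact hw.imp (fun h => by linarith) id

theorem exists_mul_one_add_le_norm_add {K : Set ℂ} (hK : IsCompact K) (hKs : K ⊆ slitPlane) :
    ∃ c > 0, ∀ w ∈ K, ∀ y : ℝ, 0 ≤ y → c * (1 + y) ≤ ‖(y : ℂ) + w‖ := by
  rcases K.eq_empty_or_nonempty with rfl | hne
  · exact ⟨1, one_pos, by simp⟩
  -- `(y + w) / (1 + y)` lies on the segment `[w, 1]`, which stays in the slit plane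
  set g : ℝ × ℂ → ℝ := fun p => ‖(p.1 : ℂ) + (1 - p.1) * p.2‖
  obtain ⟨⟨t₀, w₀⟩, ⟨ht₀, hw₀⟩, hmin⟩ := (isCompact_Icc.prod hK).exists_isMinOn
    ((nonempty_Icc.2 zero_le_one).prod hne) (f := g) (by fun_prop)
  have hseg : (t₀ : ℂ) + (1 - t₀) * w₀ ∈ slitPlane := by
    simpa [real_smul] using
      starConvex_one_slitPlane (hKs hw₀) ht₀.1 (sub_nonneg.2 ht₀.2) (by ring)
  refine ⟨g (t₀, w₀), norm_pos_iff.2 (slitPlane_ne_zero hseg), fun w hw y hy => ?_⟩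
  have hy1 : 0 < 1 + y := by linarith
  have hmem : (y / (1 + y), w) ∈ Icc (0 : ℝ) 1 ×ˢ K :=
    ⟨⟨by positivity, (div_le_one hy1).2 (by linarith)⟩, hw⟩
  have hfactor : (y : ℂ) + w = ((1 + y : ℝ) : ℂ) *
      (((y / (1 + y) : ℝ) : ℂ) + (1 - ((y / (1 + y) : ℝ) : ℂ)) * w) := by
    have : (1 + y : ℂ) ≠ 0 := by exact_mod_cast hy1.ne'
    push_cast
    field_simp
    ring
  calc g (t₀, w₀) * (1 + y) ≤ g (y / (1 + y), w) * (1 + y) := by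
        gcongr
        exact hmin hmem
    _ = ‖(y : ℂ) + w‖ := by
      rw [hfactor, norm_mul, norm_real, Real.norm_of_nonneg hy1.le, mul_comm]

theorem norm_div_ofReal_add_pow_le {a w : ℂ} {y c : ℝ} (hy : 0 ≤ y) (hc : 0 < c)
    (h : c * (1 + y) ≤ ‖(y : ℂ) + w‖) {n : ℕ} (hn : n ≠ 0) :
    ‖a / ((y : ℂ) + w) ^ n‖ ≤ (c ^ n)⁻¹ * ‖a / ((y : ℂ) + 1)‖ := by
  have hnorm : ‖(y : ℂ) + 1‖ = 1 + y := by
    rw [← ofReal_one, ← ofReal_add, norm_real, Real.norm_of_nonneg (by linarith), add_comm]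
  rw [norm_div, norm_div, norm_pow, hnorm, div_eq_mul_inv, div_eq_mul_inv, ← mul_assoc,
    mul_comm _ ‖a‖, mul_assoc]
  gcongr
  calc (‖(y : ℂ) + w‖ ^ n)⁻¹ ≤ ((c * (1 + y)) ^ n)⁻¹ := by gcongr
    _ ≤ (c ^ n)⁻¹ * (1 + y)⁻¹ := by
      rw [mul_pow, mul_inv]
      gcongr
      exact le_self_pow₀ (by linarith) hn

theorem continuousOn_cpow_div_add_pow (s : ℂ) {w : ℂ} (hw : w ∈ slitPlane) (n : ℕ) :
    ContinuousOn (fun y : ℝ => (y : ℂ) ^ (s - 1) / ((y : ℂ) + w) ^ n) (Ioi 0) := by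
  refine ContinuousOn.div (fun y hy => ?_) (by fun_prop) fun y hy =>
    pow_ne_zero n (slitPlane_ne_zero (ofReal_add_mem_slitPlane hw (le_of_lt hy)))
  exact ((continuousAt_cpow_const (ofReal_mem_slitPlane.2 hy)).comp
    continuous_ofReal.continuousAt).continuousWithinAt

theorem integrableOn_cpow_div_add {s w : ℂ} (hs0 : 0 < s.re) (hs1 : s.re < 1)
    (hw : w ∈ slitPlane) :
    IntegrableOn (fun y : ℝ => (y : ℂ) ^ (s - 1) / (y + w)) (Ioi 0) := by
  obtain ⟨c, hc, hbound⟩ :=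
    exists_mul_one_add_le_norm_add isCompact_singleton (singleton_subset_iff.2 hw)
  refine ((integrableOn_cpow_div_add_one hs0 hs1).norm.const_mul c⁻¹).mono'
    (by simpa using
      (continuousOn_cpow_div_add_pow s hw 1).aestronglyMeasurable measurableSet_Ioi) ?_
  filter_upwards [self_mem_ae_restrict measurableSet_Ioi] with y hy
  simpa using norm_div_ofReal_add_pow_le (a := (y : ℂ) ^ (s - 1)) (le_of_lt hy) hc
    (hbound w rfl y (le_of_lt hy)) one_ne_zero

theorem differentiableOn_integral_cpow_div_add {s : ℂ} (hs0 : 0 < s.re) (hs1 : s.re < 1) :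
    DifferentiableOn ℂ (fun w => ∫ y in Ioi (0 : ℝ), (y : ℂ) ^ (s - 1) / (y + w))
      slitPlane := by
  intro w₀ hw₀
  obtain ⟨ε, hε, hball⟩ :=
    Metric.nhds_basis_closedBall.mem_iff.1 (isOpen_slitPlane.mem_nhds hw₀)
  obtain ⟨c, hc, hbound⟩ := exists_mul_one_add_le_norm_add (isCompact_closedBall w₀ ε) hball
  refine (hasDerivAt_integral_of_dominated_loc_of_deriv_le (Metric.closedBall_mem_nhds w₀ hε)
    (μ := volume.restrict (Ioi 0)) (F := fun w (y : ℝ) => (y : ℂ) ^ (s - 1) / (y + w))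
    (F' := fun w y => -((y : ℂ) ^ (s - 1) / ((y : ℂ) + w) ^ 2))
    (bound := fun y : ℝ => (c ^ 2)⁻¹ * ‖(y : ℂ) ^ (s - 1) / (y + 1)‖) ?_
    (integrableOn_cpow_div_add hs0 hs1 hw₀)
    ((continuousOn_cpow_div_add_pow s hw₀ 2).neg.aestronglyMeasurable measurableSet_Ioi) ?_
    ((integrableOn_cpow_div_add_one hs0 hs1).norm.const_mul _) ?_).2.differentiableAt
    |>.differentiableWithinAt
  · filter_upwards [isOpen_slitPlane.mem_nhds hw₀] with w hw
    simpa using (continuousOn_cpow_div_add_pow s hw 1).aestronglyMeasurable measurableSet_Ioi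
  · filter_upwards [self_mem_ae_restrict measurableSet_Ioi] with y hy w hw
    rw [norm_neg]
    exact norm_div_ofReal_add_pow_le (le_of_lt hy) hc (hbound w hw y (le_of_lt hy)) two_ne_zero
  · filter_upwards [self_mem_ae_restrict measurableSet_Ioi] with y hy w hw
    have hne := slitPlane_ne_zero (ofReal_add_mem_slitPlane (hball hw) (le_of_lt hy))
    exact ((hasDerivAt_const w _).div ((hasDerivAt_id' w).const_add (y : ℂ)) hne).congr_deriv
      (by ring)

theorem integral_cpow_div_add {s z : ℂ} (hs0 : 0 < s.re) (hs1 : s.re < 1)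
    (hz : z ∈ slitPlane) :
    ∫ y in Ioi (0 : ℝ), (y : ℂ) ^ (s - 1) / (y + z) = π * z ^ (s - 1) / sin (π * s) := by
  have hF := (differentiableOn_integral_cpow_div_add hs0 hs1).analyticOnNhd isOpen_slitPlane
  have hG : AnalyticOnNhd ℂ (fun w : ℂ => π * w ^ (s - 1) / sin (π * s)) slitPlane :=
    (DifferentiableOn.div_const (fun w hw => ((differentiableAt_id.cpow_const hw).const_mul
      _).differentiableWithinAt) _).analyticOnNhd isOpen_slitPlane
  refine hF.eqOn_of_preconnected_of_frequently_eq hG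
    (starConvex_one_slitPlane.isPathConnected one_mem_slitPlane).isConnected.isPreconnected
    one_mem_slitPlane ?_ hz
  have hreal : Tendsto ((↑) : ℝ → ℂ) (𝓝[≠] 1) (𝓝[≠] 1) :=
    tendsto_nhdsWithin_iff.2 ⟨(continuous_ofReal.tendsto' 1 1 ofReal_one).mono_left
      nhdsWithin_le_nhds, eventually_nhdsWithin_of_forall fun x hx => ofReal_ne_one.2 hx⟩
  refine hreal.frequently (Eventually.frequently ?_)
  filter_upwards [eventually_nhdsWithin_of_eventually_nhds (lt_mem_nhds one_pos)] with x hx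
  rw [integral_cpow_div_add_ofReal s hx, integral_cpow_div_add_one hs0 hs1]
  ring

end Complex

/-- For `α ∈ (0,1)` and `z ∉ (−∞,0]`,
`∫₀^∞ y^(α−1)/(y+z) dy = π z^(α−1)/sin(απ)` (principal branch). -/
theorem stmt2 (α : ℝ) (hα : α ∈ Set.Ioo (0:ℝ) 1) (z : ℂ)
    (hz : ∀ x : ℝ, x ≤ 0 → z ≠ (x : ℂ)) :
    ∫ y in Set.Ioi (0:ℝ), (y : ℂ) ^ ((α : ℂ) - 1) / ((y : ℂ) + z)
      = (Real.pi : ℂ) * z ^ ((α : ℂ) - 1) / ((Real.sin (α * Real.pi) : ℝ) : ℂ) := by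
  have hz' : z ∈ Complex.slitPlane := by
    rw [Complex.mem_slitPlane_iff]
    by_contra! h
    exact hz z.re h.1 (Complex.ext (by simp) (by simp [h.2]))
  rw [Complex.integral_cpow_div_add (by simpa using hα.1) (by simpa using hα.2) hz',
    Complex.ofReal_sin, Complex.ofReal_mul, mul_comm (α : ℂ)]
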